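/- arXiv:0810.2037 — 2 statements merged into one kernel-verified Lean document; each statement's English description precedes it below -/
import Mathlib

section
/- Let A₁ and A₂ be rings, W an (A₁,A₂)-bimodule that is finitely generated and projective as a left A₁-module, and A = A₁[W]A₂ the triangular matrix ring of matrices (a₁ w; 0 a₂). Then every left A-module M such that e₁M is a projective A₁-module and e₂M is a projective A₂-module (where e₁, e₂ are the diagonal idempotents) has projective dimension at most 1. -/
noncomputable section

variable (A₁ A₂ W : Type) [Ring A₁] [Ring A₂]
  [AddCommGroup W] [Module A₁ W] [Module A₂ᵐᵒᵖ W] [SMulCommClass A₁ A₂ᵐᵒᵖ W]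

/-- `W` as a left module over `A₁ × A₂` (via the first factor). -/
instance modLeft : Module (A₁ × A₂) W := Module.compHom W (RingHom.fst A₁ A₂)

/-- `W` as a right module over `A₁ × A₂` (via the second factor). -/
instance modRight : Module (A₁ × A₂)ᵐᵒᵖ W :=
  Module.compHom W (RingHom.op (RingHom.snd A₁ A₂))

instance commCls : SMulCommClass (A₁ × A₂) (A₁ × A₂)ᵐᵒᵖ W :=
  ⟨fun r s w => smul_comm r.1 (MulOpposite.op s.unop.2) w⟩

/-- The triangular matrix ring `A₁[W]A₂` of matrices `(a₁ w; 0 a₂)`, realized as the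
trivial square-zero extension of `A₁ × A₂` by the `(A₁,A₂)`-bimodule `W`. -/
abbrev TriRing := TrivSqZeroExt (A₁ × A₂) W

/-- The diagonal idempotent `e₁ = (1 0; 0 0)`. -/
def e1 : TriRing A₁ A₂ W := TrivSqZeroExt.inl ((1 : A₁), (0 : A₂))

/-- The diagonal idempotent `e₂ = (0 0; 0 1)`. -/
def e2 : TriRing A₁ A₂ W := TrivSqZeroExt.inl ((0 : A₁), (1 : A₂))

/-- The statement that the corner `e • M` of a module `M` over a ring `A`, regarded as a
module over a ring `A'` acting through `ι : A' → A`, is a projective `A'`-module: there is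
a projective `A'`-module `Q` and an additive isomorphism of `Q` onto `e • M` carrying the
`A'`-action to the action through `ι`. -/
def CornerProjective (A' A M : Type) [Ring A'] [Ring A] [AddCommGroup M] [Module A M]
    (ι : A' → A) (e : A) : Prop :=
  ∃ (Q : Type) (_ : AddCommGroup Q) (_ : Module A' Q), Module.Projective A' Q ∧
    ∃ g : Q →+ M, Function.Injective g ∧
      Set.range g = Set.range (fun m : M => e • m) ∧
      ∀ (a : A') (q : Q), g (a • q) = ι a • g q

/-!
Write `A = A₁[W]A₂`. As `e₂Ae₁ = 0`, there is a short exact sequence of `A`-modules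
`0 → e₁M → M → e₂M → 0` (the second map is `m ↦ e₂m`), where `A` acts on `e₁M` through the
projection `A → A₁` and on `e₂M` through `A → A₂`. Restriction along `A → A₁` preserves
projectivity, since `A₁ ≅ Ae₁` is a direct summand of `A`; so `e₁M` is projective. The kernel of
`A → A₂` is the column `A₁ ⊕ W`, on which `A` acts through `A₁`, hence it is projective because `W`
is. So a free `A₂`-module `A₂^(I)` has the projective resolution `0 → ker^(I) → A^(I) → A₂^(I) → 0`,
and its direct summand `e₂M` has projective dimension at most `1`. Then so has `M`.
-/

set_option linter.unusedSectionVars false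

universe u

open CategoryTheory

instance Module.Projective.finsupp {R M ι : Type*} [Ring R] [AddCommGroup M] [Module R M]
    [Module.Projective R M] : Module.Projective R (ι →₀ M) := by
  classical
  exact .of_equiv' (finsuppLequivDFinsupp R).symm

theorem Function.Exact.finsuppMapRange {ι M N L : Type*} [Zero M] [Zero N] [Zero L]
    {f : M → N} {g : N → L} {hf : f 0 = 0} {hg : g 0 = 0} (h : Function.Exact f g) :
    Function.Exact (Finsupp.mapRange (α := ι) f hf) (Finsupp.mapRange g hg) := fun x => by
  simp [Finsupp.range_mapRange, Finsupp.ext_iff, h _]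

theorem Module.Projective.of_isScalarTower {A B N : Type*} [Ring A] [Ring B] [Module A B]
    [IsScalarTower A B B] [AddCommGroup N] [Module A N] [Module B N] [IsScalarTower A B N]
    [Module.Projective A B] [Module.Projective B N] : Module.Projective A N := by
  obtain ⟨s, hs⟩ := Module.projective_def'.1 ‹Module.Projective B N›
  exact .of_split (M := N →₀ B) (s.restrictScalars A)
    ((Finsupp.linearCombination B id).restrictScalars A) (LinearMap.ext fun n => congr($hs n))

theorem Module.Projective.restrictScalars {A B : Type u} [Ring A] [Ring B] (π : A →+* B)
    [Module.Projective A ((ModuleCat.restrictScalars π).obj (ModuleCat.of B B))]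
    (N : Type u) [AddCommGroup N] [Module B N] [Module.Projective B N] :
    Module.Projective A ((ModuleCat.restrictScalars π).obj (ModuleCat.of B N)) := by
  let _ : Module A B := Module.compHom B π
  let _ : Module A N := Module.compHom N π
  have : IsScalarTower A B B := ⟨fun a b c => mul_assoc (π a) b c⟩
  have : IsScalarTower A B N := ⟨fun a b n => mul_smul (π a) b n⟩
  have : Module.Projective A B :=
    ‹Module.Projective A ((ModuleCat.restrictScalars π).obj (ModuleCat.of B B))›
  exact Module.Projective.of_isScalarTower (A := A) (B := B) (N := N)

theorem hasProjectiveDimensionLT_two_restrictScalars {A B : Type u} [Ring A] [Ring B]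
    (π : A →+* B) (hπ : Function.Surjective π) [Module.Projective A (RingHom.ker π)]
    (N : Type u) [AddCommGroup N] [Module B N] [Module.Projective B N] :
    HasProjectiveDimensionLT ((ModuleCat.restrictScalars π).obj (ModuleCat.of B N)) 2 := by
  obtain ⟨s, hs⟩ := Module.projective_def'.1 ‹Module.Projective B N›
  let F := (ModuleCat.restrictScalars π).obj (ModuleCat.of B (N →₀ B))
  let φ : (N →₀ A) →ₗ[A] F :=
    { toFun := Finsupp.mapRange π π.map_zero
      map_add' := Finsupp.mapRange_add (map_add π)
      map_smul' := fun a x => Finsupp.ext fun n => map_mul π a (x n) }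
  have hexact : Function.Exact (Finsupp.mapRange.linearMap (α := N) (RingHom.ker π).subtype) φ :=
    Function.Exact.finsuppMapRange (hf := map_zero _) (hg := map_zero π) fun a => by
      simp [RingHom.mem_ker]
  have hS : (ModuleCat.shortComplexOfCompEqZero _ _ hexact.linearMap_comp_eq_zero).ShortExact :=
    ModuleCat.shortComplex_shortExact _ hexact
      (Finsupp.mapRange_injective _ (map_zero _) Subtype.val_injective)
      (Finsupp.mapRange_surjective _ (map_zero π) hπ)
  have hF : HasProjectiveDimensionLT F 2 :=
    hS.hasProjectiveDimensionLT_X₃ 1 inferInstance inferInstance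
  let r : Retract (ModuleCat.of.{u} B N) (ModuleCat.of B (N →₀ B)) :=
    ⟨ModuleCat.ofHom s, ModuleCat.ofHom (Finsupp.linearCombination B id),
      by ext; exact congr($hs _)⟩
  exact (r.map (ModuleCat.restrictScalars π)).hasProjectiveDimensionLT 2

theorem exists_projective_resolution_of_hasProjectiveDimensionLT {R : Type u} [Ring R]
    (M : Type u) [AddCommGroup M] [Module R M] [HasProjectiveDimensionLT (ModuleCat.of R M) 2] :
    ∃ (P Q : Type u) (_ : AddCommGroup P) (_ : Module R P) (_ : AddCommGroup Q) (_ : Module R Q),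
      Module.Projective R P ∧ Module.Projective R Q ∧
      ∃ (f : Q →ₗ[R] P) (g : P →ₗ[R] M),
        Function.Injective f ∧ Function.Surjective g ∧ LinearMap.range f = LinearMap.ker g := by
  let g : (M →₀ R) →ₗ[R] M := Finsupp.linearCombination R id
  have hg : Function.Surjective g := fun m => ⟨Finsupp.single m 1, by simp [g]⟩
  have : HasProjectiveDimensionLT (ModuleCat.of R (LinearMap.ker g)) 1 :=
    (LinearMap.shortExact_shortComplexKer hg).hasProjectiveDimensionLT_X₁ 1 inferInstance ‹_›
  refine ⟨M →₀ R, LinearMap.ker g, _, _, _, _, inferInstance,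
    (IsProjective.iff_projective _).2 inferInstance, (LinearMap.ker g).subtype, g,
    Subtype.val_injective, hg, Submodule.range_subtype _⟩

namespace TriRing

open TrivSqZeroExt

def proj₁ : TriRing A₁ A₂ W →+* A₁ :=
  (RingHom.fst A₁ A₂).comp (fstHom ℕ (A₁ × A₂) W).toRingHom

def proj₂ : TriRing A₁ A₂ W →+* A₂ :=
  (RingHom.snd A₁ A₂).comp (fstHom ℕ (A₁ × A₂) W).toRingHom

variable {A₁ A₂ W}

@[simp] theorem modLeft_smul (p : A₁ × A₂) (w : W) : p • w = p.1 • w := rfl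

@[simp] theorem modRight_smul (p : (A₁ × A₂)ᵐᵒᵖ) (w : W) : p • w = MulOpposite.op p.unop.2 • w :=
  rfl

@[simp] theorem proj₂_apply (x : TriRing A₁ A₂ W) : proj₂ A₁ A₂ W x = x.fst.2 := rfl

theorem mul_inl_fst (x : TriRing A₁ A₂ W) (a : A₁) :
    x * inl (a, 0) = inl (x.fst.1 * a, 0) :=
  TrivSqZeroExt.ext (by simp [Prod.ext_iff]) (by simp)

theorem mul_e1 (x : TriRing A₁ A₂ W) : x * e1 A₁ A₂ W = inl (x.fst.1, 0) := by
  rw [e1, mul_inl_fst, mul_one]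

theorem e2_mul (x : TriRing A₁ A₂ W) : e2 A₁ A₂ W * x = inl (0, x.fst.2) :=
  TrivSqZeroExt.ext (by simp [e2, Prod.ext_iff]) (by simp [e2])

theorem inl_mul_e2 (b : A₂) : (inl (0, b) : TriRing A₁ A₂ W) * e2 A₁ A₂ W = inl (0, b) := by
  rw [e2, inl_mul_inl, Prod.mk_mul_mk, mul_zero, mul_one]

theorem e2_mul_e1 : e2 A₁ A₂ W * e1 A₁ A₂ W = 0 := by
  rw [e2_mul, e1, fst_inl, ← Prod.zero_eq_mk, inl_zero]

theorem e1_add_e2 : e1 A₁ A₂ W + e2 A₁ A₂ W = 1 :=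
  TrivSqZeroExt.ext (by simp [e1, e2]) (by simp [e1, e2])

theorem proj₂_surjective : Function.Surjective (proj₂ A₁ A₂ W) :=
  fun b => ⟨inl (0, b), rfl⟩

instance projective_restrictScalars_proj₁_self :
    Module.Projective (TriRing A₁ A₂ W)
      ((ModuleCat.restrictScalars (proj₁ A₁ A₂ W)).obj (ModuleCat.of A₁ A₁)) :=
  .of_split (M := TriRing A₁ A₂ W)
    { toFun (a : A₁) := inl (a, 0)
      map_add' (a b : A₁) := by rw [← inl_add, Prod.mk_add_mk, add_zero]; rfl
      map_smul' x (a : A₁) := (mul_inl_fst x a).symm }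
    { toFun := proj₁ A₁ A₂ W
      map_add' := map_add _
      map_smul' x y := map_mul (proj₁ A₁ A₂ W) x y }
    rfl

def kerProj₂Equiv :
    RingHom.ker (proj₂ A₁ A₂ W) ≃ₗ[TriRing A₁ A₂ W]
      (ModuleCat.restrictScalars (proj₁ A₁ A₂ W)).obj (ModuleCat.of A₁ (A₁ × W)) where
  toFun k := (k.1.fst.1, k.1.snd)
  invFun p := ⟨inl (p.1, 0) + inr p.2, by simp [RingHom.mem_ker]⟩
  map_add' k l := rfl
  map_smul' x k := by
    have hk : k.1.fst.2 = 0 := k.2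
    change ((x * k.1).fst.1, (x * k.1).snd) = (x.fst.1 * k.1.fst.1, x.fst.1 • k.1.snd)
    simp [hk]
  left_inv k := by
    have hk : k.1.fst.2 = 0 := k.2
    ext <;> simp [hk]
  right_inv p := by
    change ((p.1 + 0 : A₁), (0 + p.2 : W)) = p
    rw [add_zero, zero_add]
    rfl

section Corners

variable {M : Type} [AddCommGroup M] [Module (TriRing A₁ A₂ W) M]

def ofFirstCorner {Q : Type} [AddCommGroup Q] [Module A₁ Q] {g : Q →+ M}
    (hg : Set.range g = Set.range (fun m : M => e1 A₁ A₂ W • m))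
    (hsmul : ∀ (a : A₁) (q : Q), g (a • q) = (inl (a, 0) : TriRing A₁ A₂ W) • g q) :
    (ModuleCat.restrictScalars (proj₁ A₁ A₂ W)).obj (ModuleCat.of A₁ Q) →ₗ[TriRing A₁ A₂ W]
      M where
  toFun := g
  map_add' := g.map_add
  map_smul' x (q : Q) := by
    obtain ⟨m, hm⟩ : g q ∈ Set.range (fun m : M => e1 A₁ A₂ W • m) := hg ▸ Set.mem_range_self q
    change g (x.fst.1 • q) = x • g q
    simp only [hsmul, ← hm, smul_smul, mul_e1, fst_inl]

theorem apply_invFun_e2_smul {Q : Type} [AddCommGroup Q] {g : Q →+ M}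
    (hg : Set.range g = Set.range (fun m : M => e2 A₁ A₂ W • m)) (m : M) :
    g (Function.invFun g (e2 A₁ A₂ W • m)) = e2 A₁ A₂ W • m :=
  Function.invFun_eq (by rw [← Set.mem_range, hg]; exact Set.mem_range_self m)

def toSecondCorner {Q : Type} [AddCommGroup Q] [Module A₂ Q] {g : Q →+ M}
    (hinj : Function.Injective g) (hg : Set.range g = Set.range (fun m : M => e2 A₁ A₂ W • m))
    (hsmul : ∀ (b : A₂) (q : Q), g (b • q) = (inl (0, b) : TriRing A₁ A₂ W) • g q) :
    M →ₗ[TriRing A₁ A₂ W]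
      (ModuleCat.restrictScalars (proj₂ A₁ A₂ W)).obj (ModuleCat.of A₂ Q) where
  toFun m := Function.invFun g (e2 A₁ A₂ W • m)
  map_add' m m' := hinj <| by
    change g (Function.invFun g _) = g (Function.invFun g _ + Function.invFun g _)
    rw [map_add, apply_invFun_e2_smul hg, apply_invFun_e2_smul hg, apply_invFun_e2_smul hg,
      smul_add]
  map_smul' x m := hinj <| by
    change g (Function.invFun g _) = g (x.fst.2 • Function.invFun g _)
    rw [hsmul, apply_invFun_e2_smul hg, apply_invFun_e2_smul hg, smul_smul, smul_smul, e2_mul,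
      inl_mul_e2]

theorem toSecondCorner_surjective {Q : Type} [AddCommGroup Q] [Module A₂ Q] {g : Q →+ M}
    (hinj : Function.Injective g) (hg : Set.range g = Set.range (fun m : M => e2 A₁ A₂ W • m))
    (hsmul : ∀ (b : A₂) (q : Q), g (b • q) = (inl (0, b) : TriRing A₁ A₂ W) • g q) :
    Function.Surjective (toSecondCorner hinj hg hsmul) := fun q => by
  obtain ⟨m, hm⟩ : g q ∈ Set.range (fun m : M => e2 A₁ A₂ W • m) := hg ▸ Set.mem_range_self q
  exact ⟨m, hinj <| (apply_invFun_e2_smul hg m).trans hm⟩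

theorem exact_ofFirstCorner_toSecondCorner
    {Q₁ : Type} [AddCommGroup Q₁] [Module A₁ Q₁] {g₁ : Q₁ →+ M}
    (hg₁ : Set.range g₁ = Set.range (fun m : M => e1 A₁ A₂ W • m))
    (hsmul₁ : ∀ (a : A₁) (q : Q₁), g₁ (a • q) = (inl (a, 0) : TriRing A₁ A₂ W) • g₁ q)
    {Q₂ : Type} [AddCommGroup Q₂] [Module A₂ Q₂] {g₂ : Q₂ →+ M} (hinj₂ : Function.Injective g₂)
    (hg₂ : Set.range g₂ = Set.range (fun m : M => e2 A₁ A₂ W • m))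
    (hsmul₂ : ∀ (b : A₂) (q : Q₂), g₂ (b • q) = (inl (0, b) : TriRing A₁ A₂ W) • g₂ q) :
    Function.Exact (ofFirstCorner hg₁ hsmul₁) (toSecondCorner hinj₂ hg₂ hsmul₂) := fun m => by
  have hker : toSecondCorner hinj₂ hg₂ hsmul₂ m = 0 ↔ e2 A₁ A₂ W • m = 0 := by
    rw [← apply_invFun_e2_smul hg₂ m]
    exact (map_eq_zero_iff g₂ hinj₂).symm
  change _ ↔ m ∈ Set.range g₁
  rw [hker, hg₁]
  constructor
  · intro h
    refine ⟨m, ?_⟩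
    change e1 A₁ A₂ W • m = m
    conv_rhs => rw [← one_smul (TriRing A₁ A₂ W) m, ← e1_add_e2, add_smul, h, add_zero]
  · rintro ⟨m', rfl⟩
    change e2 A₁ A₂ W • e1 A₁ A₂ W • m' = 0
    rw [smul_smul, e2_mul_e1, zero_smul]

end Corners

end TriRing

theorem stmt0
    (hWproj : Module.Projective A₁ W)
    (M : Type) [AddCommGroup M] [Module (TriRing A₁ A₂ W) M]
    (h1 : CornerProjective A₁ (TriRing A₁ A₂ W) M
      (fun a => TrivSqZeroExt.inl (a, (0 : A₂))) (e1 A₁ A₂ W))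
    (h2 : CornerProjective A₂ (TriRing A₁ A₂ W) M
      (fun a => TrivSqZeroExt.inl ((0 : A₁), a)) (e2 A₁ A₂ W)) :
    ∃ (P Q : Type) (_ : AddCommGroup P) (_ : Module (TriRing A₁ A₂ W) P)
      (_ : AddCommGroup Q) (_ : Module (TriRing A₁ A₂ W) Q),
      Module.Projective (TriRing A₁ A₂ W) P ∧ Module.Projective (TriRing A₁ A₂ W) Q ∧
      ∃ (f : Q →ₗ[TriRing A₁ A₂ W] P) (g : P →ₗ[TriRing A₁ A₂ W] M),
        Function.Injective f ∧ Function.Surjective g ∧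
        LinearMap.range f = LinearMap.ker g := by
  obtain ⟨Q₁, _, _, hQ₁, g₁, hinj₁, hg₁, hsmul₁⟩ := h1
  obtain ⟨Q₂, _, _, hQ₂, g₂, hinj₂, hg₂, hsmul₂⟩ := h2
  have hexact := TriRing.exact_ofFirstCorner_toSecondCorner hg₁ hsmul₁ hinj₂ hg₂ hsmul₂
  have hS : (ModuleCat.shortComplexOfCompEqZero _ _ hexact.linearMap_comp_eq_zero).ShortExact :=
    ModuleCat.shortComplex_shortExact _ hexact hinj₁
      (TriRing.toSecondCorner_surjective hinj₂ hg₂ hsmul₂)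
  have hQ₁A := Module.Projective.restrictScalars (TriRing.proj₁ A₁ A₂ W) Q₁
  have hcolumn := Module.Projective.restrictScalars (TriRing.proj₁ A₁ A₂ W) (A₁ × W)
  have hker : Module.Projective (TriRing A₁ A₂ W) (RingHom.ker (TriRing.proj₂ A₁ A₂ W)) :=
    .of_equiv' TriRing.kerProj₂Equiv.symm
  have hM := hS.hasProjectiveDimensionLT_X₂ 2 inferInstance
    (hasProjectiveDimensionLT_two_restrictScalars (TriRing.proj₂ A₁ A₂ W)
      TriRing.proj₂_surjective Q₂)
  exact exists_projective_resolution_of_hasProjectiveDimensionLT M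
end
end

section
/- Let A₁ and A₂ be rings, W an (A₁,A₂)-bimodule finitely generated as a left A₁-module, and A = A₁[W]A₂ the triangular matrix ring. A left A-module M = (P₁, φ, P₂), where P₁ is a projective A₁-module, P₂ a projective A₂-module, and φ : W ⊗_{A₂} P₂ → P₁ the multiplication map, is a projective A-module if and only if φ is a split monomorphism of A₁-modules. -/
/-!
If `M = (P₁, φ, P₂)` is projective, take an `A`-linear section `s` of the free presentation
`(M →₀ A) → M` and let `ρ p` be the `W`-coordinates of `s (p, 0)`. Since
`(φ (w ⊗ q), 0) = w • (0, q)`, we get `s (φ (w ⊗ q), 0) = w • s (0, q)`, whose `W`-coordinates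
are `w ⊗ q`; so `ρ` retracts `φ`. It is `A₁`-linear because `(a • p, 0) = inl (a, 0) • (p, 0)`.

Conversely, a retraction `ρ` splits `P₁ = ker ρ ⊕ im φ`, so `M` is the sum of `(ker ρ, 0, 0)` and
`(W ⊗ P₂, id, P₂)`. Concretely, given sections `gᵢ` of the free presentations of the `Pᵢ`, the
section of `(M →₀ A) → M` sends `(p₁, p₂)` to the lift of `g₁ (p₁ - φ (ρ p₁))` along the
corner `A₁ ⊆ A`, plus `w • ĝ₂ q` for each term `w ⊗ q` of `ρ p₁`, plus the lift `ĝ₂ p₂` of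
`g₂ p₂` along the corner `A₂ ⊆ A`.
-/

noncomputable section

variable (A₁ A₂ W : Type) [Ring A₁] [Ring A₂]
  [AddCommGroup W] [Module A₁ W] [Module A₂ᵐᵒᵖ W] [SMulCommClass A₁ A₂ᵐᵒᵖ W]

variable (P₂ : Type) [AddCommGroup P₂] [Module A₂ P₂]

/-- The defining relations of the tensor product `W ⊗_{A₂} P₂`. -/
def wrel : Submodule ℤ (TensorProduct ℤ W P₂) :=
  Submodule.span ℤ {x | ∃ (a : A₂) (w : W) (p : P₂),
    x = (MulOpposite.op a • w) ⊗ₜ[ℤ] p - w ⊗ₜ[ℤ] (a • p)}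

/-- The tensor product `W ⊗_{A₂} P₂` over the (possibly noncommutative) ring `A₂`. -/
abbrev WTensor := TensorProduct ℤ W P₂ ⧸ wrel A₂ W P₂

/-- The elementary tensor `w ⊗ p` in `W ⊗_{A₂} P₂`. -/
def wmk (w : W) (p : P₂) : WTensor A₂ W P₂ :=
  Submodule.Quotient.mk (w ⊗ₜ[ℤ] p)

/-- Left multiplication by `a : A₁` on `W`, as a `ℤ`-linear map. -/
def smulW (a : A₁) : W →ₗ[ℤ] W where
  toFun := (a • ·)
  map_add' := smul_add a
  map_smul' z w := smul_comm a z w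

/-- The left action of `a : A₁` on `W ⊗_{A₂} P₂` (through the left action on `W`). -/
def tau (a : A₁) : WTensor A₂ W P₂ →ₗ[ℤ] WTensor A₂ W P₂ :=
  Submodule.mapQ _ _ (LinearMap.rTensor P₂ (smulW A₁ W a)) (by
    rw [wrel, Submodule.span_le]
    rintro x ⟨b, w, p, rfl⟩
    have : (LinearMap.rTensor P₂ (smulW A₁ W a))
        ((MulOpposite.op b • w) ⊗ₜ[ℤ] p - w ⊗ₜ[ℤ] (b • p))
        = (MulOpposite.op b • (a • w)) ⊗ₜ[ℤ] p - (a • w) ⊗ₜ[ℤ] (b • p) := by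
      simp [smulW, smul_comm]
    rw [SetLike.mem_coe]
    refine Submodule.mem_comap.mpr ?_
    first
      | exact this ▸ Submodule.subset_span ⟨b, a • w, p, rfl⟩
      | (erw [this]; exact Submodule.subset_span ⟨b, a • w, p, rfl⟩)
      | (convert Submodule.subset_span ⟨b, a • w, p, rfl⟩ using 1))

namespace Finsupp

variable {ι X R S : Type*} [Semiring R] [Semiring S]

def mapDomainRange (e : ι → X) (κ : S →+ R) : (ι →₀ S) →+ (X →₀ R) :=
  (mapDomain.addMonoidHom e).comp (mapRange.addMonoidHom κ)

variable {e : ι → X} {κ : S →+ R}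

@[simp]
theorem mapDomainRange_single (i : ι) (b : S) :
    mapDomainRange e κ (single i b) = single (e i) (κ b) := by
  simp [mapDomainRange, mapDomain_single]

theorem smul_mapDomainRange {r : R} {s : S} (h : ∀ b, r * κ b = κ (s * b)) (f : ι →₀ S) :
    r • mapDomainRange e κ f = mapDomainRange e κ (s • f) := by
  induction f using Finsupp.induction_linear with
  | zero => simp
  | add f g hf hg => rw [map_add, smul_add, hf, hg, smul_add, map_add]
  | single i b => simp only [smul_single, smul_eq_mul, mapDomainRange_single, h]

theorem linearCombination_mapDomainRange {N N' : Type*} [AddCommMonoid N] [Module R N]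
    [AddCommMonoid N'] [Module S N'] {v : X → N} {u : ι → N'} (g : N' →+ N)
    (h : ∀ i b, κ b • v (e i) = g (b • u i)) (f : ι →₀ S) :
    linearCombination R v (mapDomainRange e κ f) = g (linearCombination S u f) := by
  induction f using Finsupp.induction_linear with
  | zero => simp
  | add f g hf hg => simp only [map_add, hf, hg]
  | single i b => simp [h]

end Finsupp

namespace TrivSqZeroExt

variable {R M X Y : Type*} [Semiring R] [AddCommMonoid M] [Module R M] [Module Rᵐᵒᵖ M]
  [SMulCommClass R Rᵐᵒᵖ M] [AddCommMonoid X] [AddCommMonoid Y]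
  [Module (TrivSqZeroExt R M) X] [Module (TrivSqZeroExt R M) Y]

theorem map_smul_of_inl_of_inr (f : X →+ Y)
    (hinl : ∀ (r : R) x, f ((inl r : TrivSqZeroExt R M) • x) = (inl r : TrivSqZeroExt R M) • f x)
    (hinr : ∀ (m : M) x, f ((inr m : TrivSqZeroExt R M) • x) = (inr m : TrivSqZeroExt R M) • f x)
    (a : TrivSqZeroExt R M) (x : X) : f (a • x) = a • f x := by
  rw [← inl_fst_add_inr_snd_eq a, add_smul, add_smul, map_add, hinl, hinr]

end TrivSqZeroExt

open TrivSqZeroExt MulOpposite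

section WTensor

variable {A₁ A₂ W P₂}

theorem wmk_op_smul (a : A₂) (w : W) (p : P₂) :
    wmk A₂ W P₂ (op a • w) p = wmk A₂ W P₂ w (a • p) := by
  rw [wmk, wmk, ← sub_eq_zero, ← Submodule.Quotient.mk_sub, Submodule.Quotient.mk_eq_zero]
  exact Submodule.subset_span ⟨a, w, p, rfl⟩

theorem tau_wmk (a : A₁) (w : W) (p : P₂) :
    tau A₁ A₂ W P₂ a (wmk A₂ W P₂ w p) = wmk A₂ W P₂ (a • w) p :=
  rfl

theorem wmk_add_right (w : W) (p p' : P₂) :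
    wmk A₂ W P₂ w (p + p') = wmk A₂ W P₂ w p + wmk A₂ W P₂ w p' := by
  simp [wmk, TensorProduct.tmul_add]

theorem wmk_add_left (w w' : W) (p : P₂) :
    wmk A₂ W P₂ (w + w') p = wmk A₂ W P₂ w p + wmk A₂ W P₂ w' p := by
  simp [wmk, TensorProduct.add_tmul]

variable (A₂ W P₂) in
def wmkHom : W →+ P₂ →+ WTensor A₂ W P₂ :=
  AddMonoidHom.mk' (fun w => AddMonoidHom.mk' (wmk A₂ W P₂ w) (wmk_add_right w))
    fun w w' => AddMonoidHom.ext (wmk_add_left w w')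

@[elab_as_elim]
theorem WTensor.induction_on {C : WTensor A₂ W P₂ → Prop} (x : WTensor A₂ W P₂) (zero : C 0)
    (wmk : ∀ w p, C (wmk A₂ W P₂ w p)) (add : ∀ x y, C x → C y → C (x + y)) : C x := by
  obtain ⟨t, rfl⟩ := Submodule.Quotient.mk_surjective _ x
  induction t with
  | zero => exact zero
  | tmul w p => exact wmk w p
  | add x y hx hy => exact add _ _ hx hy

variable {X : Type*} [AddCommGroup X]

def WTensor.lift (B : W →+ P₂ →+ X) (hB : ∀ (a : A₂) w p, B (op a • w) p = B w (a • p)) :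
    WTensor A₂ W P₂ →+ X :=
  ((wrel A₂ W P₂).liftQ (TensorProduct.liftAddHom B fun n w p => by simp).toIntLinearMap <| by
    rw [wrel, Submodule.span_le]
    rintro _ ⟨a, w, p, rfl⟩
    simp [TensorProduct.liftAddHom_tmul, hB]).toAddMonoidHom

@[simp]
theorem WTensor.lift_wmk (B : W →+ P₂ →+ X) (hB : ∀ (a : A₂) w p, B (op a • w) p = B w (a • p))
    (w : W) (p : P₂) : WTensor.lift B hB (wmk A₂ W P₂ w p) = B w p :=
  rfl

end WTensor

section Corners

variable {A₁ A₂ W}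

omit [SMulCommClass A₁ A₂ᵐᵒᵖ W]

variable (A₂ W) in
def corner₁ : A₁ →+ TriRing A₁ A₂ W :=
  (inlHom (A₁ × A₂) W).toAddMonoidHom.comp (AddMonoidHom.inl A₁ A₂)

variable (A₁ W) in
def corner₂ : A₂ →+ TriRing A₁ A₂ W :=
  (inlHom (A₁ × A₂) W).toAddMonoidHom.comp (AddMonoidHom.inr A₁ A₂)

theorem corner₁_apply (b : A₁) : corner₁ A₂ W b = inl (b, 0) := rfl

theorem corner₂_apply (b : A₂) : corner₂ A₁ W b = inl (0, b) := rfl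

theorem inl_mul_corner₁ (r : A₁ × A₂) (b : A₁) :
    (inl r : TriRing A₁ A₂ W) * corner₁ A₂ W b = corner₁ A₂ W (r.1 * b) := by
  rw [corner₁_apply, corner₁_apply, inl_mul_inl, Prod.mk_mul_mk, mul_zero]

theorem inl_mul_corner₂ (r : A₁ × A₂) (b : A₂) :
    (inl r : TriRing A₁ A₂ W) * corner₂ A₁ W b = corner₂ A₁ W (r.2 * b) := by
  rw [corner₂_apply, corner₂_apply, inl_mul_inl, Prod.mk_mul_mk, mul_zero]

theorem inr_mul_corner₁ (w : W) (b : A₁) :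
    (inr w : TriRing A₁ A₂ W) * corner₁ A₂ W b = 0 := by
  rw [corner₁_apply, inr_mul_inl]
  show inr (op (0 : A₂) • w) = 0
  rw [op_zero, zero_smul, inr_zero]

theorem inr_mul_corner₂ (w : W) (b : A₂) :
    (inr w : TriRing A₁ A₂ W) * corner₂ A₁ W b = inr (op b • w) := by
  rw [corner₂_apply, inr_mul_inl]
  rfl

end Corners

section FreeModule

variable {A₁ A₂ W P₂} {X : Type*}

theorem inl_smul_mapDomainRange_corner₁ {Y : Type*} (e : Y → X) (r : A₁ × A₂) (f : Y →₀ A₁) :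
    (inl r : TriRing A₁ A₂ W) • Finsupp.mapDomainRange e (corner₁ A₂ W) f
      = Finsupp.mapDomainRange e (corner₁ A₂ W) (r.1 • f) :=
  Finsupp.smul_mapDomainRange (inl_mul_corner₁ r) f

theorem inl_smul_mapDomainRange_corner₂ {Y : Type*} (e : Y → X) (r : A₁ × A₂) (f : Y →₀ A₂) :
    (inl r : TriRing A₁ A₂ W) • Finsupp.mapDomainRange e (corner₂ A₁ W) f
      = Finsupp.mapDomainRange e (corner₂ A₁ W) (r.2 • f) :=
  Finsupp.smul_mapDomainRange (inl_mul_corner₂ r) f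

theorem inr_smul_mapDomainRange_corner₁ {Y : Type*} (e : Y → X) (w : W) (f : Y →₀ A₁) :
    (inr w : TriRing A₁ A₂ W) • Finsupp.mapDomainRange e (corner₁ A₂ W) f = 0 := by
  rw [Finsupp.smul_mapDomainRange (s := 0) fun b => by rw [inr_mul_corner₁, zero_mul, map_zero],
    zero_smul, map_zero]

def wCoord (v : X → P₂) : (X →₀ TriRing A₁ A₂ W) →+ WTensor A₂ W P₂ :=
  Finsupp.liftAddHom fun x =>
    ((wmkHom A₂ W P₂).flip (v x)).comp (sndHom (A₁ × A₂) W).toAddMonoidHom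

omit [SMulCommClass A₁ A₂ᵐᵒᵖ W] in
@[simp]
theorem wCoord_single (v : X → P₂) (x : X) (r : TriRing A₁ A₂ W) :
    wCoord v (Finsupp.single x r) = wmk A₂ W P₂ r.snd (v x) :=
  Finsupp.liftAddHom_apply_single _ _ _

theorem wCoord_inl_smul (v : X → P₂) (r : A₁ × A₂) (g : X →₀ TriRing A₁ A₂ W) :
    wCoord v ((inl r : TriRing A₁ A₂ W) • g) = tau A₁ A₂ W P₂ r.1 (wCoord v g) := by
  induction g using Finsupp.induction_linear with
  | zero => simp
  | add f g hf hg => rw [smul_add, map_add, hf, hg, map_add, map_add]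
  | single m r =>
    rw [Finsupp.smul_single, smul_eq_mul, inl_mul_eq_smul, wCoord_single, wCoord_single,
      tau_wmk, snd_smul]
    rfl

omit [SMulCommClass A₁ A₂ᵐᵒᵖ W] in
theorem wCoord_inr_smul_single (v : X → P₂) (w : W) (x : X) (r : TriRing A₁ A₂ W) :
    wCoord v ((inr w : TriRing A₁ A₂ W) • Finsupp.single x r)
      = wmk A₂ W P₂ w (r.fst.2 • v x) := by
  have : (inr w * r).snd = op r.fst.2 • w := by
    rw [snd_mul, fst_inr, snd_inr, zero_smul, zero_add]
    rfl
  rw [Finsupp.smul_single, smul_eq_mul, wCoord_single, this, wmk_op_smul]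

variable (A₁) in
def tensorSection (e : P₂ → X) (g₂ : P₂ →ₗ[A₂] (P₂ →₀ A₂)) :
    WTensor A₂ W P₂ →+ (X →₀ TriRing A₁ A₂ W) :=
  WTensor.lift (((smulAddHom (TriRing A₁ A₂ W) (X →₀ TriRing A₁ A₂ W)).comp
      (inrHom (A₁ × A₂) W).toAddMonoidHom).compl₂
      ((Finsupp.mapDomainRange e (corner₂ A₁ W)).comp g₂.toAddMonoidHom)) fun a w p => by
    simp only [AddMonoidHom.compl₂_apply, AddMonoidHom.comp_apply, smulAddHom_apply,
      LinearMap.toAddMonoidHom_coe, inrHom_apply, map_smul]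
    rw [← inr_mul_corner₂, mul_smul, Finsupp.smul_mapDomainRange (inl_mul_corner₂ (0, a))]

theorem tensorSection_wmk (e : P₂ → X) (g₂ : P₂ →ₗ[A₂] (P₂ →₀ A₂)) (w : W) (p : P₂) :
    tensorSection A₁ e g₂ (wmk A₂ W P₂ w p)
      = (inr w : TriRing A₁ A₂ W) • Finsupp.mapDomainRange e (corner₂ A₁ W) (g₂ p) :=
  WTensor.lift_wmk _ _ w p

theorem inl_smul_tensorSection (e : P₂ → X) (g₂ : P₂ →ₗ[A₂] (P₂ →₀ A₂)) (r : A₁ × A₂)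
    (x : WTensor A₂ W P₂) :
    (inl r : TriRing A₁ A₂ W) • tensorSection A₁ e g₂ x
      = tensorSection A₁ e g₂ (tau A₁ A₂ W P₂ r.1 x) := by
  induction x using WTensor.induction_on with
  | zero => simp
  | add x y hx hy => rw [map_add, smul_add, hx, hy, map_add, map_add]
  | wmk w p => rw [tensorSection_wmk, smul_smul, inl_mul_inr, tau_wmk, tensorSection_wmk]; rfl

theorem inr_smul_tensorSection (e : P₂ → X) (g₂ : P₂ →ₗ[A₂] (P₂ →₀ A₂)) (w : W)
    (x : WTensor A₂ W P₂) :
    (inr w : TriRing A₁ A₂ W) • tensorSection A₁ e g₂ x = 0 := by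
  induction x using WTensor.induction_on with
  | zero => simp
  | add x y hx hy => rw [map_add, smul_add, hx, hy, add_zero]
  | wmk w' p => rw [tensorSection_wmk, smul_smul, inr_mul_inr, zero_smul]

end FreeModule

section TriangularModule

variable {A₁ A₂ W P₂} {P₁ : Type} [AddCommGroup P₁] [Module A₁ P₁] {φ : WTensor A₂ W P₂ →ₗ[ℤ] P₁}

variable (φ) in
def splittingSection (ρ : P₁ →ₗ[ℤ] WTensor A₂ W P₂) (g₁ : P₁ →ₗ[A₁] (P₁ →₀ A₁))
    (g₂ : P₂ →ₗ[A₂] (P₂ →₀ A₂)) : P₁ × P₂ →+ (P₁ × P₂ →₀ TriRing A₁ A₂ W) where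
  toFun x := Finsupp.mapDomainRange (fun q => (q, 0)) (corner₁ A₂ W) (g₁ (x.1 - φ (ρ x.1)))
    + tensorSection A₁ (fun q => (0, q)) g₂ (ρ x.1)
    + Finsupp.mapDomainRange (fun q => (0, q)) (corner₂ A₁ W) (g₂ x.2)
  map_zero' := by simp
  map_add' x y := by
    simp only [Prod.fst_add, Prod.snd_add, map_add, map_sub]
    abel

variable {ρ : P₁ →ₗ[ℤ] WTensor A₂ W P₂} {g₁ : P₁ →ₗ[A₁] (P₁ →₀ A₁)}
  {g₂ : P₂ →ₗ[A₂] (P₂ →₀ A₂)}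

theorem splittingSection_apply (x : P₁ × P₂) :
    splittingSection φ ρ g₁ g₂ x
      = Finsupp.mapDomainRange (fun q => (q, 0)) (corner₁ A₂ W) (g₁ (x.1 - φ (ρ x.1)))
        + tensorSection A₁ (fun q => (0, q)) g₂ (ρ x.1)
        + Finsupp.mapDomainRange (fun q => (0, q)) (corner₂ A₁ W) (g₂ x.2) :=
  rfl

variable [Module (TriRing A₁ A₂ W) (P₁ × P₂)]
  (hinl : ∀ (a₁ : A₁) (a₂ : A₂) (p₁ : P₁) (p₂ : P₂),
    (inl (a₁, a₂) : TriRing A₁ A₂ W) • ((p₁, p₂) : P₁ × P₂) = (a₁ • p₁, a₂ • p₂))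
  (hinr : ∀ (w : W) (p₁ : P₁) (p₂ : P₂),
    (inr w : TriRing A₁ A₂ W) • ((p₁, p₂) : P₁ × P₂) = (φ (wmk A₂ W P₂ w p₂), 0))

include hinl hinr in
theorem snd_smul_eq (r : TriRing A₁ A₂ W) (m : P₁ × P₂) : (r • m).2 = r.fst.2 • m.2 := by
  conv_lhs => rw [← inl_fst_add_inr_snd_eq r, add_smul, Prod.snd_add, hinl, hinr, add_zero]

include hinl hinr in
theorem wCoord_inr_smul (w : W) (g : P₁ × P₂ →₀ TriRing A₁ A₂ W) :
    wCoord Prod.snd ((inr w : TriRing A₁ A₂ W) • g)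
      = wmk A₂ W P₂ w (Finsupp.linearCombination (TriRing A₁ A₂ W) id g).2 := by
  induction g using Finsupp.induction_linear with
  | zero => simp [wmk]
  | add f g hf hg => rw [smul_add, map_add, hf, hg, map_add, Prod.snd_add, wmk_add_right]
  | single m r =>
    rw [wCoord_inr_smul_single, Finsupp.linearCombination_single, snd_smul_eq hinl hinr, id]

include hinl hinr in
theorem exists_retraction_of_projective [Module.Projective (TriRing A₁ A₂ W) (P₁ × P₂)] :
    ∃ ρ : P₁ →ₗ[ℤ] WTensor A₂ W P₂,
      (∀ (a : A₁) (p : P₁), ρ (a • p) = tau A₁ A₂ W P₂ a (ρ p)) ∧ ∀ x, ρ (φ x) = x := by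
  obtain ⟨s, hs⟩ := Module.Projective.out (R := TriRing A₁ A₂ W) (P := P₁ × P₂)
  let ρ : P₁ →ₗ[ℤ] WTensor A₂ W P₂ :=
    ((wCoord Prod.snd).comp (s.toAddMonoidHom.comp (AddMonoidHom.inl P₁ P₂))).toIntLinearMap
  have hρ_smul (a : A₁) (p : P₁) : ρ (a • p) = tau A₁ A₂ W P₂ a (ρ p) := by
    have : ((a • p, 0) : P₁ × P₂) = (inl (a, 0) : TriRing A₁ A₂ W) • (p, 0) := by
      rw [hinl, smul_zero]
    simp [ρ, this, wCoord_inl_smul]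
  have hρ_wmk (w : W) (q : P₂) : ρ (φ (wmk A₂ W P₂ w q)) = wmk A₂ W P₂ w q := by
    have : ((φ (wmk A₂ W P₂ w q), 0) : P₁ × P₂) = (inr w : TriRing A₁ A₂ W) • (0, q) :=
      (hinr w 0 q).symm
    simp [ρ, this, wCoord_inr_smul hinl hinr, hs (0, q)]
  refine ⟨ρ, hρ_smul, fun x => ?_⟩
  induction x using WTensor.induction_on with
  | zero => simp only [map_zero]
  | add x y hx hy => simp only [map_add, hx, hy]
  | wmk w q => exact hρ_wmk w q

include hinl in
theorem linearCombination_corner₁ (f : P₁ →₀ A₁) :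
    Finsupp.linearCombination (TriRing A₁ A₂ W) id
        (Finsupp.mapDomainRange (fun q => (q, (0 : P₂))) (corner₁ A₂ W) f)
      = (Finsupp.linearCombination A₁ id f, 0) :=
  Finsupp.linearCombination_mapDomainRange (AddMonoidHom.inl P₁ P₂)
    (fun q b => by simp [corner₁_apply, hinl]) f

include hinl in
theorem linearCombination_corner₂ (f : P₂ →₀ A₂) :
    Finsupp.linearCombination (TriRing A₁ A₂ W) id
        (Finsupp.mapDomainRange (fun q => ((0 : P₁), q)) (corner₂ A₁ W) f)
      = (0, Finsupp.linearCombination A₂ id f) :=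
  Finsupp.linearCombination_mapDomainRange (AddMonoidHom.inr P₁ P₂)
    (fun q b => by simp [corner₂_apply, hinl]) f

include hinl hinr in
theorem linearCombination_tensorSection {g₂ : P₂ →ₗ[A₂] (P₂ →₀ A₂)}
    (hg₂ : Function.LeftInverse (Finsupp.linearCombination A₂ id) g₂) (x : WTensor A₂ W P₂) :
    Finsupp.linearCombination (TriRing A₁ A₂ W) id (tensorSection A₁ (fun q => (0, q)) g₂ x)
      = (φ x, 0) := by
  induction x using WTensor.induction_on with
  | zero => simp [Prod.zero_eq_mk]
  | add x y hx hy => rw [map_add, map_add, hx, hy, map_add, Prod.mk_add_mk, add_zero]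
  | wmk w p =>
    rw [tensorSection_wmk, map_smul, linearCombination_corner₂ hinl, hg₂, hinr]

include hinl in
theorem splittingSection_inl_smul
    (hφ : ∀ (a : A₁) (x : WTensor A₂ W P₂), φ (tau A₁ A₂ W P₂ a x) = a • φ x)
    (hρ : ∀ (a : A₁) (p : P₁), ρ (a • p) = tau A₁ A₂ W P₂ a (ρ p))
    (r : A₁ × A₂) (x : P₁ × P₂) :
    splittingSection φ ρ g₁ g₂ ((inl r : TriRing A₁ A₂ W) • x)
      = (inl r : TriRing A₁ A₂ W) • splittingSection φ ρ g₁ g₂ x := by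
  rw [show (inl r : TriRing A₁ A₂ W) • x = (r.1 • x.1, r.2 • x.2) from hinl r.1 r.2 x.1 x.2,
    splittingSection_apply, splittingSection_apply, hρ, hφ, ← smul_sub, map_smul g₁, map_smul g₂,
    smul_add, smul_add, inl_smul_mapDomainRange_corner₁, inl_smul_tensorSection,
    inl_smul_mapDomainRange_corner₂]

include hinr in
theorem splittingSection_inr_smul (hρφ : ∀ x, ρ (φ x) = x) (w : W) (x : P₁ × P₂) :
    splittingSection φ ρ g₁ g₂ ((inr w : TriRing A₁ A₂ W) • x)
      = (inr w : TriRing A₁ A₂ W) • splittingSection φ ρ g₁ g₂ x := by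
  rw [show (inr w : TriRing A₁ A₂ W) • x = (φ (wmk A₂ W P₂ w x.2), 0) from hinr w x.1 x.2,
    splittingSection_apply, splittingSection_apply, hρφ, sub_self, map_zero, map_zero,
    map_zero, map_zero, zero_add, add_zero, smul_add, smul_add, inr_smul_mapDomainRange_corner₁,
    inr_smul_tensorSection, zero_add, zero_add, tensorSection_wmk]

include hinl hinr in
theorem linearCombination_splittingSection
    (hg₁ : Function.LeftInverse (Finsupp.linearCombination A₁ id) g₁)
    (hg₂ : Function.LeftInverse (Finsupp.linearCombination A₂ id) g₂) (x : P₁ × P₂) :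
    Finsupp.linearCombination (TriRing A₁ A₂ W) id (splittingSection φ ρ g₁ g₂ x) = x := by
  rw [splittingSection_apply, map_add, map_add, linearCombination_corner₁ hinl, hg₁,
    linearCombination_tensorSection hinl hinr hg₂, linearCombination_corner₂ hinl, hg₂]
  ext <;> simp

include hinl hinr in
theorem projective_of_retraction [Module.Projective A₁ P₁] [Module.Projective A₂ P₂]
    (hφ : ∀ (a : A₁) (x : WTensor A₂ W P₂), φ (tau A₁ A₂ W P₂ a x) = a • φ x)
    (hρ : ∀ (a : A₁) (p : P₁), ρ (a • p) = tau A₁ A₂ W P₂ a (ρ p)) (hρφ : ∀ x, ρ (φ x) = x) :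
    Module.Projective (TriRing A₁ A₂ W) (P₁ × P₂) := by
  obtain ⟨g₁, hg₁⟩ := Module.Projective.out (R := A₁) (P := P₁)
  obtain ⟨g₂, hg₂⟩ := Module.Projective.out (R := A₂) (P := P₂)
  let s : P₁ × P₂ →ₗ[TriRing A₁ A₂ W] (P₁ × P₂ →₀ TriRing A₁ A₂ W) :=
    { splittingSection φ ρ g₁ g₂ with
      map_smul' := map_smul_of_inl_of_inr _ (splittingSection_inl_smul hinl hφ hρ)
        (splittingSection_inr_smul hinr hρφ) }
  exact ⟨s, linearCombination_splittingSection hinl hinr hg₁ hg₂⟩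

end TriangularModule

theorem stmt2
    (P₁ : Type) [AddCommGroup P₁] [Module A₁ P₁]
    (hP₁ : Module.Projective A₁ P₁) (hP₂ : Module.Projective A₂ P₂)
    (φ : WTensor A₂ W P₂ →ₗ[ℤ] P₁)
    (hφ : ∀ (a : A₁) (x : WTensor A₂ W P₂), φ (tau A₁ A₂ W P₂ a x) = a • φ x)
    [Module (TriRing A₁ A₂ W) (P₁ × P₂)]
    (hinl : ∀ (a₁ : A₁) (a₂ : A₂) (p₁ : P₁) (p₂ : P₂),
      (TrivSqZeroExt.inl (a₁, a₂) : TriRing A₁ A₂ W) • ((p₁, p₂) : P₁ × P₂)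
        = (a₁ • p₁, a₂ • p₂))
    (hinr : ∀ (w : W) (p₁ : P₁) (p₂ : P₂),
      (TrivSqZeroExt.inr w : TriRing A₁ A₂ W) • ((p₁, p₂) : P₁ × P₂)
        = (φ (wmk A₂ W P₂ w p₂), 0)) :
    Module.Projective (TriRing A₁ A₂ W) (P₁ × P₂) ↔
      ∃ ρ : P₁ →ₗ[ℤ] WTensor A₂ W P₂,
        (∀ (a : A₁) (p : P₁), ρ (a • p) = tau A₁ A₂ W P₂ a (ρ p)) ∧
        ∀ x : WTensor A₂ W P₂, ρ (φ x) = x :=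
  ⟨fun _ => exists_retraction_of_projective hinl hinr,
    fun ⟨_, hρ, hρφ⟩ => projective_of_retraction hinl hinr hφ hρ hρφ⟩
end
end
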